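/- arXiv:1203.3710 — 3 statements merged into one kernel-verified Lean document; each statement's English description precedes it below -/
import Mathlib

section
/- For every connected finite simple graph G with chromatic number χ(G), one has C(χ(G),2) − χ(G) ≤ |E(G)| − |V(G)|. -/
open SimpleGraph

/-- Simple-graph contraction identifying vertex `v` into vertex `u`
(the merged vertex is `u`; vertex `v` is removed). -/
def SimpleGraph.contractPair {V : Type*} (G : SimpleGraph V) (u v : V) :
    SimpleGraph {x : V // x ≠ v} where
  Adj x y := (x : V) ≠ (y : V) ∧
    (G.Adj x y ∨ ((x : V) = u ∧ G.Adj v y) ∨ ((y : V) = u ∧ G.Adj x v))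
  symm := by
    constructor
    rintro x y ⟨hne, h⟩
    refine ⟨hne.symm, ?_⟩
    rcases h with h | ⟨hx, hv⟩ | ⟨hy, hv⟩
    · exact Or.inl h.symm
    · exact Or.inr (Or.inr ⟨hx, hv.symm⟩)
    · exact Or.inr (Or.inl ⟨hy, hv.symm⟩)
  loopless := by constructor; rintro x ⟨h, -⟩; exact h rfl

/-- `H` is a minor of `G`: branch-set (model) definition. -/
def SimpleGraph.IsMinor {V W : Type*} (G : SimpleGraph V) (H : SimpleGraph W) : Prop :=
  ∃ f : W → Set V,
    (∀ w, (f w).Nonempty) ∧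
    (∀ w, (G.induce (f w)).Connected) ∧
    (∀ w w', w ≠ w' → Disjoint (f w) (f w')) ∧
    (∀ w w', H.Adj w w' → ∃ a ∈ f w, ∃ b ∈ f w', G.Adj a b)

/-- The Hadwiger number: the largest `t` with a `K_t` minor. -/
noncomputable def SimpleGraph.hadwigerNumber {V : Type*} (G : SimpleGraph V) : ℕ :=
  sSup {t | G.IsMinor (⊤ : SimpleGraph (Fin t))}

/-- `s` induces a cycle (of length ≥ 3) in `G`. -/
def SimpleGraph.IsInducedCycle {V : Type*} (G : SimpleGraph V) (s : Set V) : Prop :=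
  ∃ n, 3 ≤ n ∧ Nonempty ((G.induce s) ≃g SimpleGraph.cycleGraph n)

/-- The set of induced cycles of `G`, as vertex sets. -/
def SimpleGraph.inducedCycles {V : Type*} (G : SimpleGraph V) : Set (Set V) :=
  {s | G.IsInducedCycle s}

/-!
Induction on the number of vertices. A complete graph attains equality. Otherwise a connected
graph has non-adjacent vertices `u`, `v` with a common neighbour `w` (the start of a shortest
path between non-adjacent vertices). Identifying `v` with `u` is a surjective homomorphism, so the
contraction is connected and its chromatic number `k'` is at least `k`; it has one vertex fewer
and at least one edge fewer. Since `k ↦ C(k,2) - k` is nondecreasing for `k ≥ 1`, the bound for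
the contraction gives the bound for `G`.
-/

lemma Nat.choose_two_sub_le_choose_two_sub {k t : ℕ} (hk : 1 ≤ k) (hkt : k ≤ t) :
    ((k.choose 2 : ℕ) : ℤ) - k ≤ ((t.choose 2 : ℕ) : ℤ) - t := by
  induction t, hkt using Nat.le_induction with
  | base => rfl
  | succ n hkn ih =>
    have hchoose : (n + 1).choose 2 = n.choose 2 + n := by
      rw [Nat.choose_succ_succ', Nat.choose_one_right, add_comm]
    push_cast [hchoose]
    omega

namespace SimpleGraph

variable {V : Type*} {G : SimpleGraph V} {u v w : V}

noncomputable def contractPairMap (u v : V) (hne : u ≠ v) (a : V) : {x : V // x ≠ v} :=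
  open Classical in if h : a = v then ⟨u, hne⟩ else ⟨a, h⟩

lemma contractPairMap_of_ne (hne : u ≠ v) {a : V} (ha : a ≠ v) :
    contractPairMap u v hne a = ⟨a, ha⟩ := by
  simp [contractPairMap, ha]

lemma contractPairMap_self (hne : u ≠ v) : contractPairMap u v hne v = ⟨u, hne⟩ := by
  simp [contractPairMap]

lemma contractPairMap_surjective (hne : u ≠ v) : Function.Surjective (contractPairMap u v hne) :=
  fun x => ⟨x, contractPairMap_of_ne hne x.2⟩

lemma contractPair_adj_contractPairMap (hne : u ≠ v) (huv : ¬ G.Adj u v) {a b : V}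
    (hab : G.Adj a b) :
    (G.contractPair u v).Adj (contractPairMap u v hne a) (contractPairMap u v hne b) := by
  by_cases ha : a = v <;> by_cases hb : b = v
  · exact absurd (ha.trans hb.symm) hab.ne
  · subst ha
    rw [contractPairMap_self, contractPairMap_of_ne hne hb]
    exact ⟨fun hub : u = b => huv (hub ▸ hab.symm), .inr (.inl ⟨rfl, hab⟩)⟩
  · subst hb
    rw [contractPairMap_self, contractPairMap_of_ne hne ha]
    exact ⟨fun hau : a = u => huv (hau ▸ hab), .inr (.inr ⟨rfl, hab⟩)⟩
  · rw [contractPairMap_of_ne hne ha, contractPairMap_of_ne hne hb]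
    exact ⟨hab.ne, .inl hab⟩

noncomputable def contractPairHom (hne : u ≠ v) (huv : ¬ G.Adj u v) :
    G →g G.contractPair u v where
  toFun := contractPairMap u v hne
  map_rel' := contractPair_adj_contractPairMap hne huv

lemma edgeSet_contractPair_subset_image (hne : u ≠ v) :
    (G.contractPair u v).edgeSet ⊆ Sym2.map (contractPairMap u v hne) '' G.edgeSet := by
  rintro ⟨x, y⟩ ⟨-, hxy | ⟨hx, hvy⟩ | ⟨hy, hxv⟩⟩
  · refine ⟨s(x.1, y.1), hxy, ?_⟩
    simp [contractPairMap_of_ne hne x.2, contractPairMap_of_ne hne y.2]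
  · obtain rfl : x = ⟨u, hne⟩ := Subtype.ext hx
    refine ⟨s(v, y.1), hvy, ?_⟩
    simp [contractPairMap_self, contractPairMap_of_ne hne y.2]
  · obtain rfl : y = ⟨u, hne⟩ := Subtype.ext hy
    refine ⟨s(x.1, v), hxv, ?_⟩
    simp [contractPairMap_self, contractPairMap_of_ne hne x.2]

/-- The edges `uw` and `vw` are merged, so at least one edge is lost. -/
lemma ncard_edgeSet_contractPair_lt [Finite V] (hne : u ≠ v) (hu : G.Adj u w) (hv : G.Adj v w) :
    (G.contractPair u v).edgeSet.ncard < G.edgeSet.ncard := by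
  have hw : w ≠ v := hv.ne.symm
  have not_inj : ¬ Set.InjOn (Sym2.map (contractPairMap u v hne)) G.edgeSet := by
    intro hinj
    have h := hinj (G.mem_edgeSet.2 hu) (G.mem_edgeSet.2 hv) <| by
      simp [contractPairMap_self, contractPairMap_of_ne hne hne, contractPairMap_of_ne hne hw]
    simp only [Sym2.eq_iff, hne, false_and, false_or] at h
    exact hne (h.1.trans h.2)
  calc (G.contractPair u v).edgeSet.ncard
      ≤ (Sym2.map (contractPairMap u v hne) '' G.edgeSet).ncard :=
        Set.ncard_le_ncard (edgeSet_contractPair_subset_image hne)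
    _ < G.edgeSet.ncard :=
        lt_of_le_of_ne Set.ncard_image_le (mt Set.injOn_of_ncard_image_eq not_inj)

lemma Connected.exists_adj_adj_not_adj_of_ne_top (hG : G.Connected) (htop : G ≠ ⊤) :
    ∃ u v w, u ≠ v ∧ ¬ G.Adj u v ∧ G.Adj u w ∧ G.Adj v w := by
  obtain ⟨a, b, hab, hnadj⟩ := ne_top_iff_exists_not_adj.mp htop
  obtain ⟨p, -, hp⟩ := (hG a b).exists_path_of_dist
  obtain ⟨x, y, z, hxy, hyz, hxz, hne⟩ :=
    p.exists_adj_adj_not_adj_ne hp ((hG a b).one_lt_dist_of_ne_of_not_adj hab hnadj)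
  exact ⟨x, z, y, hne, hxz, hxy, hyz.symm⟩

lemma ncard_edgeSet_top [Finite V] :
    (⊤ : SimpleGraph V).edgeSet.ncard = (Nat.card V).choose 2 := by
  have := Fintype.ofFinite V
  classical
  rw [Set.ncard_eq_toFinset_card', Nat.card_eq_fintype_card,
    ← card_edgeFinset_top_eq_card_choose_two]
  rfl

theorem Connected.choose_two_sub_le_ncard_edgeSet_sub_card [Finite V] (hG : G.Connected) {k : ℕ}
    (hχ : G.chromaticNumber = k) :
    ((k.choose 2 : ℕ) : ℤ) - k ≤ (G.edgeSet.ncard : ℤ) - Nat.card V := by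
  induction hn : Nat.card V using Nat.strong_induction_on generalizing V k with
  | _ n ih =>
  by_cases htop : G = ⊤
  · subst htop
    rw [chromaticNumber_top_eq_enat_card, ENat.card_eq_coe_natCard, Nat.cast_inj] at hχ
    rw [ncard_edgeSet_top, ← hn, hχ]
  have := hG.nonempty
  obtain ⟨u, v, w, hne, huv, hu, hv⟩ := hG.exists_adj_adj_not_adj_of_ne_top htop
  set G' := G.contractPair u v
  have hG' : G'.Connected := hG.map (contractPairHom hne huv) (contractPairMap_surjective hne)
  obtain ⟨k', hχ'⟩ := ENat.ne_top_iff_exists.mp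
    (chromaticNumber_ne_top_iff_exists.mpr ⟨_, G'.colorable_chromaticNumber_of_fintype⟩)
  have hkk' : k ≤ k' := by
    have := chromaticNumber_mono_of_hom (contractPairHom hne huv)
    rwa [hχ, ← hχ', Nat.cast_le] at this
  have hk : 1 ≤ k := by
    have := G.colorable_chromaticNumber_of_fintype.chromaticNumber_pos
    rwa [hχ, Nat.cast_pos] at this
  have hcard : Nat.card {x : V // x ≠ v} = n - 1 := by
    have := Fintype.ofFinite V
    classical
    simp [← hn, Nat.card_eq_fintype_card, Fintype.card_subtype_compl]
  have hn_pos : 0 < n := hn ▸ Nat.card_pos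
  have IH := ih (n - 1) (by omega) hG' hχ'.symm hcard
  have hedges : G'.edgeSet.ncard < G.edgeSet.ncard := ncard_edgeSet_contractPair_lt hne hu hv
  have hmono := Nat.choose_two_sub_le_choose_two_sub hk hkk'
  push_cast [Nat.cast_sub hn_pos] at IH
  omega

end SimpleGraph

theorem stmt8 {V : Type*} [Fintype V] (G : SimpleGraph V) (hconn : G.Connected)
    (k : ℕ) (hchi : G.chromaticNumber = k) :
    ((k.choose 2 : ℕ) : ℤ) - (k : ℤ)
      ≤ (G.edgeSet.ncard : ℤ) - (Nat.card V : ℤ) :=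
  hconn.choose_two_sub_le_ncard_edgeSet_sub_card hchi
end

section
/- For a connected simple graph G, both the Hadwiger number h(G) and the chromatic number χ(G) are bounded above by ⌊(3 + √(9 + 8(|E| − |V|)))/2⌋. -/
open SimpleGraph

/-!
Fix a nonempty vertex set `s` of the connected graph `G` and a root in `s`. Every vertex outside
`s` contributes the first edge of a shortest path to the root, and these edges are distinct and
leave `s`; hence `|E| - |V| ≥ e(s) - |s|`, where `e(s)` counts edges inside `s`.

* A `K_t` minor with branch sets covering `s` has `e(s) ≥ (|s| - t) + C(t, 2)`: a spanning tree in
  each branch set plus one edge per pair of branch sets.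
* If `G` is not `n`-colourable, greedy colouring fails, so some `s` has every vertex with at least
  `n` neighbours in `s`; then `|s| ≥ n + 1` and `2 e(s) ≥ n |s|`.

Either way `|E| - |V| ≥ C(j, 2) - j` for `j = t`, resp. `j = n + 1`, and solving this quadratic
inequality gives `j ≤ (3 + √(9 + 8 (|E| - |V|))) / 2`.
-/

open Function

theorem Set.exists_forall_mem_eq_of_pairwise_disjoint {α ι : Type*} [Nonempty ι]
    {f : ι → Set α} (hf : Pairwise (Disjoint on f)) : ∃ β : α → ι, ∀ i, ∀ x ∈ f i, β x = i := by
  classical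
  refine ⟨fun x ↦ if hx : ∃ i, x ∈ f i then hx.choose else Classical.arbitrary ι,
    fun i x hx ↦ ?_⟩
  have hx' : ∃ i, x ∈ f i := ⟨i, hx⟩
  simp only [dif_pos hx']
  by_contra hij
  exact Set.disjoint_left.1 (hf hij) hx'.choose_spec hx

namespace SimpleGraph

variable {V : Type*} {G : SimpleGraph V}

open Finset

theorem Connected.exists_adj_dist_lt (hG : G.Connected) {u v : V} (h : v ≠ u) :
    ∃ w, G.Adj v w ∧ G.dist w u < G.dist v u := by
  obtain ⟨p, hp⟩ := hG.exists_walk_length_eq_dist v u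
  cases p with
  | nil => exact absurd rfl h
  | cons hadj q => exact ⟨_, hadj, (dist_le q).trans_lt (by simp [← hp])⟩

theorem Connected.card_add_card_le_card_edgeSet_add_ncard [Finite V] (hG : G.Connected)
    {s : Set V} (hs : s.Nonempty) {ι : Type*} {e : ι → Sym2 V} (he : Injective e)
    (heG : ∀ i, e i ∈ G.edgeSet) (hes : ∀ i, ∀ x ∈ e i, x ∈ s) :
    Nat.card ι + Nat.card V ≤ Nat.card G.edgeSet + s.ncard := by
  obtain ⟨u, hu⟩ := hs
  have : Finite ι := .of_injective e he
  choose p hp using fun v : ↥sᶜ ↦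
    hG.exists_adj_dist_lt (u := u) (v := v) (ne_of_mem_of_not_mem hu v.2).symm
  let parentEdge : ↥sᶜ → G.edgeSet := fun v ↦ ⟨s(v, p v), (hp v).1⟩
  have hparent : Injective parentEdge := by
    intro v w hvw
    rcases Sym2.eq_iff.1 (congrArg Subtype.val hvw) with ⟨h, -⟩ | ⟨hv, hw⟩
    · exact Subtype.ext h
    · have := (hp v).2
      have := (hp w).2
      rw [hv, ← hw] at *
      omega
  have hinj : Injective (Sum.elim (fun i ↦ (⟨e i, heG i⟩ : G.edgeSet)) parentEdge) := by
    refine he.codRestrict _ |>.sumElim hparent fun i v h ↦ v.2 (hes i v ?_)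
    rw [show e i = s(↑v, p v) from congrArg Subtype.val h]
    exact Sym2.mem_mk_left _ _
  have := Nat.card_le_card_of_injective (β := G.edgeSet) _ hinj
  rw [Nat.card_sum, Nat.card_coe_set_eq] at this
  have := Set.ncard_add_ncard_compl s
  omega

theorem Connected.card_add_choose_two_le_of_isMinor [Finite V] (hG : G.Connected) {t : ℕ}
    (ht : 0 < t) (h : G.IsMinor (⊤ : SimpleGraph (Fin t))) :
    Nat.card V + t.choose 2 ≤ Nat.card G.edgeSet + t := by
  obtain ⟨f, hne, hconn, hdisj, hadj⟩ := h
  -- `β` names the branch set of a vertex; edges inside a branch set go to diagonal pairs under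
  -- `Sym2.map β`, while the chosen linking edges go to the (off-diagonal) edges of `K_t`.
  have : Nonempty (Fin t) := ⟨⟨0, ht⟩⟩
  obtain ⟨β, hβ⟩ := Set.exists_forall_mem_eq_of_pairwise_disjoint (f := f) fun _ _ ↦ hdisj _ _
  let inner : (Σ i, (G.induce (f i)).edgeSet) → Sym2 V := fun x ↦ x.2.1.map (↑)
  have hinner : ∀ x, inner x ∈ G.edgeSet ∧ (∀ y ∈ inner x, y ∈ f x.1) ∧
      (inner x).map β = s(x.1, x.1) := by
    rintro ⟨i, e, he⟩
    induction e using Sym2.ind with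
    | _ a b => exact ⟨he, by simp [inner], by simp [inner, hβ i a a.2, hβ i b b.2]⟩
  have hlink : ∀ e : (⊤ : SimpleGraph (Fin t)).edgeSet,
      ∃ e' ∈ G.edgeSet, (∀ y ∈ e', y ∈ ⋃ i, f i) ∧ e'.map β = e := by
    rintro ⟨e, he⟩
    induction e using Sym2.ind with
    | _ i j =>
      obtain ⟨a, ha, b, hb, hab⟩ := hadj i j he
      refine ⟨s(a, b), hab, ?_, by simp [hβ i a ha, hβ j b hb]⟩
      simp only [Sym2.mem_iff, Set.mem_iUnion]
      rintro y (rfl | rfl)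
      exacts [⟨i, ha⟩, ⟨j, hb⟩]
  choose link hlinkG hlinkf hlinkβ using hlink
  have hinj : Injective (Sum.elim inner link) := by
    refine Injective.sumElim ?_ ?_ ?_
    · rintro ⟨i, x⟩ ⟨j, y⟩ hxy
      obtain rfl : i = j := by simpa [(hinner _).2.2] using congrArg (Sym2.map β) hxy
      simp only [inner] at hxy
      rw [Subtype.ext (Sym2.map.injective Subtype.val_injective hxy)]
    · intro e e' hee'
      exact Subtype.ext <| by simpa [hlinkβ] using congrArg (Sym2.map β) hee'
    · intro x e hxe
      apply not_isDiag_of_mem_edgeSet _ e.2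
      rw [← hlinkβ, ← hxe, (hinner x).2.2]
      exact Sym2.mk_isDiag_iff.2 rfl
  have hcount := hG.card_add_card_le_card_edgeSet_add_ncard (s := ⋃ i, f i)
    ⟨_, Set.mem_iUnion.2 ⟨_, (hne ⟨0, ht⟩).some_mem⟩⟩ hinj
    (Sum.forall.2 ⟨fun x ↦ (hinner x).1, hlinkG⟩)
    (Sum.forall.2 ⟨fun x y hy ↦ Set.mem_iUnion.2 ⟨x.1, (hinner x).2.1 y hy⟩, hlinkf⟩)
  have hbranch : (⋃ i, f i).ncard ≤ ∑ i, Nat.card (G.induce (f i)).edgeSet + t :=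
    calc (⋃ i, f i).ncard ≤ ∑ i, (f i).ncard := Set.ncard_iUnion_le_of_fintype f
      _ ≤ ∑ i, (Nat.card (G.induce (f i)).edgeSet + 1) :=
        sum_le_sum fun i _ ↦ (hconn i).card_vert_le_card_edgeSet_add_one
      _ = ∑ i, Nat.card (G.induce (f i)).edgeSet + t := by simp [sum_add_distrib]
  have htop : Nat.card (⊤ : SimpleGraph (Fin t)).edgeSet = t.choose 2 := by
    rw [Nat.card_eq_fintype_card, ← edgeFinset_card, card_edgeFinset_top_eq_card_choose_two,
      Fintype.card_fin]
  rw [Nat.card_sum, Nat.card_sigma, htop] at hcount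
  omega

theorem colorable_of_forall_exists_card_neighborFinset_inter_lt [Fintype V] [DecidableEq V]
    [DecidableRel G.Adj] {n : ℕ}
    (h : ∀ s : Finset V, s.Nonempty → ∃ v ∈ s, #(G.neighborFinset v ∩ s) < n) :
    G.Colorable n := by
  cases isEmpty_or_nonempty V
  · exact .of_isEmpty n
  obtain ⟨v, -, hn⟩ := h univ univ_nonempty
  have : NeZero n := ⟨(Nat.zero_le _).trans_lt hn |>.ne'⟩
  suffices ∀ s : Finset V, ∃ c : V → Fin n, ∀ x ∈ s, ∀ y ∈ s, G.Adj x y → c x ≠ c y by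
    obtain ⟨c, hc⟩ := this univ
    exact ⟨Coloring.mk c fun hxy ↦ hc _ (mem_univ _) _ (mem_univ _) hxy⟩
  intro s
  induction s using Finset.strongInduction with
  | H s ih =>
    rcases s.eq_empty_or_nonempty with rfl | hs
    · exact ⟨0, by simp⟩
    obtain ⟨v, hv, hdeg⟩ := h s hs
    obtain ⟨c, hc⟩ := ih (s.erase v) (erase_ssubset hv)
    obtain ⟨a, -, ha⟩ := exists_mem_notMem_of_card_lt_card
      (s := (G.neighborFinset v ∩ s).image c) (t := univ)
      (by simpa using card_image_le.trans_lt hdeg)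
    have hfree : ∀ y ∈ s, G.Adj v y → a ≠ c y := fun y hy hvy hay ↦
      ha (mem_image.2 ⟨y, mem_inter.2 ⟨(mem_neighborFinset _ _ _).2 hvy, hy⟩, hay.symm⟩)
    refine ⟨update c v a, fun x hx y hy hxy ↦ ?_⟩
    rcases eq_or_ne v x with rfl | hxv <;> rcases eq_or_ne v y with rfl | hyv
    · exact absurd rfl hxy.ne
    · simpa [hyv.symm] using hfree y hy hxy
    · simpa [hxv.symm] using (hfree x hx hxy.symm).symm
    · simpa [hxv.symm, hyv.symm] using
        hc x (mem_erase.2 ⟨hxv.symm, hx⟩) y (mem_erase.2 ⟨hyv.symm, hy⟩) hxy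

theorem sum_card_neighborFinset_inter_eq_two_mul_card_edgeSet_induce [Fintype V]
    [DecidableEq V] [DecidableRel G.Adj] (s : Finset V) :
    ∑ v ∈ s, #(G.neighborFinset v ∩ s) = 2 * Nat.card (G.induce (s : Set V)).edgeSet := by
  rw [Nat.card_eq_fintype_card, ← edgeFinset_card, ← sum_degrees_eq_twice_card_edges,
    ← sum_coe_sort s]
  refine sum_congr rfl fun v _ ↦ ?_
  rw [← card_neighborFinset_eq_degree, ← card_map (.subtype _)]
  congr 1
  ext
  simp [and_comm]

theorem Connected.card_add_choose_two_le_of_not_colorable [Fintype V] (hG : G.Connected)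
    {n : ℕ} (h : ¬ G.Colorable n) :
    Nat.card V + (n + 1).choose 2 ≤ Nat.card G.edgeSet + (n + 1) := by
  classical
  have hV := hG.card_vert_le_card_edgeSet_add_one
  rcases lt_or_ge n 2 with hn | hn
  · have : (n + 1).choose 2 ≤ n := by interval_cases n <;> decide
    omega
  obtain ⟨s, hs, hdeg⟩ :
      ∃ s : Finset V, s.Nonempty ∧ ∀ v ∈ s, n ≤ #(G.neighborFinset v ∩ s) := by
    by_contra! h'
    exact h (colorable_of_forall_exists_card_neighborFinset_inter_lt h')
  have hcard : n + 1 ≤ #s := by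
    obtain ⟨v, hv⟩ := hs
    have hsub : G.neighborFinset v ∩ s ⊆ s.erase v := fun w hw ↦
      mem_erase.2 ⟨((mem_neighborFinset _ _ _).1 (mem_inter.1 hw).1).ne', (mem_inter.1 hw).2⟩
    have := (hdeg v hv).trans (card_le_card hsub)
    rw [card_erase_of_mem hv] at this
    omega
  have hsum : n * #s ≤ 2 * Nat.card (G.induce (s : Set V)).edgeSet := by
    rw [← sum_card_neighborFinset_inter_eq_two_mul_card_edgeSet_induce, mul_comm,
      ← smul_eq_mul, ← sum_const]
    exact sum_le_sum hdeg
  have hcount := hG.card_add_card_le_card_edgeSet_add_ncard (s := (s : Set V)) hs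
    (e := fun e : (G.induce (s : Set V)).edgeSet ↦ e.1.map (↑))
    ((Sym2.map.injective Subtype.val_injective).comp Subtype.val_injective)
    (fun e ↦ (Embedding.induce _).toHom.map_mem_edgeSet e.2)
    (fun e x hx ↦ by obtain ⟨y, -, rfl⟩ := Sym2.mem_map.1 hx; exact y.2)
  rw [Set.ncard_coe_finset] at hcount
  have hchoose : 2 * (n + 1).choose 2 = (n + 1) * n := by
    rw [Nat.choose_two_right, Nat.add_sub_cancel, mul_comm (n + 1) n,
      Nat.two_mul_div_two_of_even (Nat.even_mul_succ_self n)]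
  nlinarith

end SimpleGraph

theorem natCast_le_floor_of_add_choose_two_le {N M j : ℕ} (h : N + j.choose 2 ≤ M + j) :
    (j : ℤ) ≤ ⌊(3 + √(9 + 8 * ((M : ℝ) - N))) / 2⌋ := by
  rw [Int.le_floor, Int.cast_natCast]
  have h' : (N : ℝ) + j * (j - 1) / 2 ≤ M + j := by
    rw [← Nat.cast_choose_two]
    exact_mod_cast h
  have hsq : (2 * (j : ℝ) - 3) ^ 2 ≤ 9 + 8 * ((M : ℝ) - N) := by nlinarith
  linarith [(le_abs_self _).trans (Real.abs_le_sqrt hsq)]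

theorem stmt9 {V : Type*} [Fintype V] (G : SimpleGraph V) (hconn : G.Connected)
    (k : ℕ) (hchi : G.chromaticNumber = k) :
    (G.hadwigerNumber : ℤ) ≤
      ⌊(3 + Real.sqrt (9 + 8 * ((G.edgeSet.ncard : ℝ) - (Nat.card V : ℝ)))) / 2⌋ ∧
    (k : ℤ) ≤
      ⌊(3 + Real.sqrt (9 + 8 * ((G.edgeSet.ncard : ℝ) - (Nat.card V : ℝ)))) / 2⌋ := by
  rw [← Nat.card_coe_set_eq]
  set B := ⌊(3 + √(9 + 8 * ((Nat.card G.edgeSet : ℝ) - Nat.card V))) / 2⌋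
  have hB : 0 ≤ B := Int.floor_nonneg.2 (by positivity)
  have hbound : ∀ j : ℕ, (0 < j → Nat.card V + j.choose 2 ≤ Nat.card G.edgeSet + j) →
      (j : ℤ) ≤ B := by
    rintro (_ | j) hj
    · exact hB
    · exact natCast_le_floor_of_add_choose_two_le (hj j.succ_pos)
  refine ⟨?_, hbound k fun hk ↦ ?_⟩
  · have : G.hadwigerNumber ≤ B.toNat := csSup_le' fun t ht ↦
      Int.le_toNat hB |>.2 <| hbound t (hconn.card_add_choose_two_le_of_isMinor · ht)
    omega
  · obtain ⟨n, rfl⟩ := Nat.exists_eq_add_one_of_ne_zero hk.ne'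
    refine hconn.card_add_choose_two_le_of_not_colorable fun hcol ↦ ?_
    have := hchi ▸ hcol.chromaticNumber_le
    exact absurd (by exact_mod_cast this) n.not_succ_le_self
end

section
/- Let G be a connected simple graph with an edge e. Then there is an injection ψ from the set of induced cycles of G/e into the set of induced cycles of G such that for every induced cycle C of G/e, contracting e in ψ(C) yields C. -/
/-!
Write `C` as an induced embedding `f` of `cycleGraph (n + 3)` into `G/e`, rotated so that `f 0`
is the merged vertex `u` whenever `u` lies on `C`. Each of the two `C`-neighbours of `u` is
adjacent in `G` to `u` or to `v`. If `u` is not on `C`, or both neighbours see `u`, then `C`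
itself is an induced cycle of `G`; if both see `v`, replacing `u` by `v` gives one. Otherwise
one neighbour sees only `u` and the other only `v`, and inserting `v` between `u` and the latter
gives an induced cycle of length `n + 4`. In every case the lift contracts back to `C`, which
makes the choice of lifts injective.
-/

open SimpleGraph

/-- The quotient map on vertices for the contraction identifying `v` into `u`. -/
def contractMap {V : Type*} [DecidableEq V] {u v : V} (huv : u ≠ v) :
    V → {x : V // x ≠ v} :=
  fun x => if h : x = v then ⟨u, huv⟩ else ⟨x, h⟩

theorem contractMap_coe {V : Type*} [DecidableEq V] {u v : V} (huv : u ≠ v)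
    (x : {x // x ≠ v}) : contractMap huv x = x := by
  simp [contractMap, x.2]

theorem contractMap_self {V : Type*} [DecidableEq V] {u v : V} (huv : u ≠ v) :
    contractMap huv v = ⟨u, huv⟩ := by
  simp [contractMap]

namespace SimpleGraph

theorem cycleGraph_adj_iff_val {n : ℕ} {i j : Fin (n + 2)} :
    (cycleGraph (n + 2)).Adj i j ↔ i.val + 1 = j.val ∨ j.val + 1 = i.val ∨
      (i.val = 0 ∧ j.val = n + 1) ∨ (j.val = 0 ∧ i.val = n + 1) := by
  rw [cycleGraph_adj, sub_eq_iff_eq_add, sub_eq_iff_eq_add, add_comm 1 j, add_comm 1 i,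
    Fin.ext_iff, Fin.ext_iff, Fin.val_add_one, Fin.val_add_one]
  split_ifs with hi hj hj <;> simp only [Fin.ext_iff, Fin.val_last] at hi hj <;> omega

theorem cycleGraph_adj_zero {n : ℕ} {j : Fin (n + 3)} :
    (cycleGraph (n + 3)).Adj 0 j ↔ j = 1 ∨ j = Fin.last _ := by
  obtain ⟨j, hj⟩ := j
  simp only [cycleGraph_adj_iff_val, Fin.ext_iff, Fin.coe_ofNat_eq_mod, Nat.zero_mod, Nat.one_mod,
    true_and, Fin.val_last]
  omega

theorem cycleGraph_adj_succ {n : ℕ} {i j : Fin (n + 3)} :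
    (cycleGraph (n + 4)).Adj i.succ j.succ ↔
      (cycleGraph (n + 3)).Adj i j ∧ ¬(i = 0 ∧ j = Fin.last _) ∧ ¬(j = 0 ∧ i = Fin.last _) := by
  simp only [cycleGraph_adj_iff_val, Fin.ext_iff, Fin.val_succ, Fin.val_zero, Fin.val_last]
  omega

theorem cycleGraph_adj_zero_succ {n : ℕ} {j : Fin (n + 3)} :
    (cycleGraph (n + 4)).Adj 0 j.succ ↔ j = 0 ∨ j = Fin.last _ := by
  obtain ⟨j, hj⟩ := j
  simp only [cycleGraph_adj_iff_val, Fin.ext_iff, Fin.coe_ofNat_eq_mod, Nat.zero_mod, true_and,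
    Fin.val_last, Fin.val_succ]
  omega

def cycleGraph.rotate {n : ℕ} (k : Fin (n + 2)) : cycleGraph (n + 2) ≃g cycleGraph (n + 2) where
  toEquiv := Equiv.addRight k
  map_rel_iff' := by simp [cycleGraph_adj]

def cycleGraph.reflect (n : ℕ) : cycleGraph (n + 2) ≃g cycleGraph (n + 2) where
  toEquiv := Equiv.neg _
  map_rel_iff' := by simp only [Equiv.neg_apply, cycleGraph_adj, neg_sub_neg, or_comm, implies_true]

variable {V : Type*} {G : SimpleGraph V}

theorem isInducedCycle_range {n : ℕ} (hn : 3 ≤ n) (f : cycleGraph n ↪g G) :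
    G.IsInducedCycle (Set.range f) :=
  ⟨n, hn, ⟨f.isoInduceRange.symm⟩⟩

theorem Embedding.range_comp_iso {α β : Type*} {K : SimpleGraph α} {K' : SimpleGraph β}
    (f : K ↪g G) (e : K' ≃g K) : Set.range (f.comp e.toRelEmbedding) = Set.range f := by
  simp only [RelEmbedding.coe_trans, RelIso.coe_toRelEmbedding, EquivLike.range_comp]

theorem IsInducedCycle.exists_embedding {s : Set V} (hs : G.IsInducedCycle s) :
    ∃ n, ∃ f : cycleGraph (n + 3) ↪g G, Set.range f = s := by
  obtain ⟨n, hn, ⟨φ⟩⟩ := hs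
  obtain ⟨n, rfl⟩ : ∃ m, n = m + 3 := ⟨n - 3, by omega⟩
  exact ⟨n, (Embedding.induce s).comp φ.symm.toRelEmbedding,
    (Embedding.range_comp_iso _ _).trans Subtype.range_coe⟩

theorem isInducedCycle_range_of_lift {W : Type*} (π : V → W) {n : ℕ} {f : Fin (n + 3) → W}
    (hf : Function.Injective f) (g : Fin (n + 3) → V) (hg : ∀ i, π (g i) = f i)
    (hadj : ∀ i j, G.Adj (g i) (g j) ↔ (cycleGraph (n + 3)).Adj i j) :
    G.IsInducedCycle (Set.range g) ∧ π '' Set.range g = Set.range f := by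
  have hinj : Function.Injective g := fun i j h => hf <| by rw [← hg, ← hg, h]
  refine ⟨isInducedCycle_range (by omega) ⟨⟨g, hinj⟩, fun {i j} => hadj i j⟩, ?_⟩
  rw [← Set.range_comp, show π ∘ g = f from funext hg]

theorem adj_apply_iff_of_adj_apply_iff {α : Type*} {K : SimpleGraph α} (g : α → V) (a : α)
    (ha : ∀ j, j ≠ a → (G.Adj (g a) (g j) ↔ K.Adj a j))
    (hne : ∀ i j, i ≠ a → j ≠ a → (G.Adj (g i) (g j) ↔ K.Adj i j)) (i j : α) :
    G.Adj (g i) (g j) ↔ K.Adj i j := by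
  by_cases hi : i = a <;> by_cases hj : j = a
  · subst hi hj; simp
  · subst hi; exact ha j hj
  · subst hj; rw [G.adj_comm, K.adj_comm]; exact ha i hi
  · exact hne i j hi hj

section Contraction

variable {u v : V}

theorem contractPair_adj_of_adj {x y : {x // x ≠ v}} (h : G.Adj x y) :
    (G.contractPair u v).Adj x y :=
  ⟨h.ne, Or.inl h⟩

theorem contractPair_adj_iff_of_ne {x y : {x // x ≠ v}} (hx : (x : V) ≠ u) (hy : (y : V) ≠ u) :
    (G.contractPair u v).Adj x y ↔ G.Adj x y := by
  refine ⟨fun ⟨_, h⟩ => ?_, contractPair_adj_of_adj⟩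
  rcases h with h | ⟨hxu, -⟩ | ⟨hyu, -⟩
  exacts [h, (hx hxu).elim, (hy hyu).elim]

theorem contractPair_adj_iff_of_eq {x y : {x // x ≠ v}} (hx : (x : V) = u) (hy : (y : V) ≠ u) :
    (G.contractPair u v).Adj x y ↔ G.Adj u y ∨ G.Adj v y := by
  subst hx
  refine ⟨fun ⟨_, h⟩ => ?_, fun h => ⟨Ne.symm hy, ?_⟩⟩
  · rcases h with h | ⟨-, h⟩ | ⟨hyu, -⟩
    exacts [Or.inl h, Or.inr h, (hy hyu).elim]
  · rcases h with h | h
    exacts [Or.inl h, Or.inr (Or.inl ⟨rfl, h⟩)]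

variable (he : G.Adj u v) {n : ℕ} (f : cycleGraph (n + 3) ↪g G.contractPair u v)
  (h0 : (f 0 : V) = u)
include h0

theorem contractPair_val_apply_eq_iff {j : Fin (n + 3)} : (f j : V) = u ↔ j = 0 := by
  rw [← f.injective.eq_iff (a := j) (b := 0), ← Subtype.val_inj, h0]

theorem contractPair_adj_val_apply_iff {i j : Fin (n + 3)} (hi : i ≠ 0) (hj : j ≠ 0) :
    G.Adj (f i) (f j) ↔ (cycleGraph (n + 3)).Adj i j := by
  rw [← contractPair_adj_iff_of_ne ((contractPair_val_apply_eq_iff f h0).not.mpr hi)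
    ((contractPair_val_apply_eq_iff f h0).not.mpr hj), f.map_adj_iff]

theorem contractPair_adj_or_adj_val_apply_iff {j : Fin (n + 3)} (hj : j ≠ 0) :
    G.Adj u (f j) ∨ G.Adj v (f j) ↔ j = 1 ∨ j = Fin.last _ := by
  rw [← contractPair_adj_iff_of_eq h0 ((contractPair_val_apply_eq_iff f h0).not.mpr hj),
    f.map_adj_iff, cycleGraph_adj_zero]

theorem contractPair_adj_val_apply_iff_succ (h1 : G.Adj u (f 1))
    (hl' : ¬G.Adj u (f (Fin.last _))) (i j : Fin (n + 3)) :
    G.Adj (f i) (f j) ↔ (cycleGraph (n + 4)).Adj i.succ j.succ := by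
  have hu : ∀ j, j ≠ 0 → (G.Adj u (f j) ↔ j = 1) := fun j hj =>
    ⟨fun h => ((contractPair_adj_or_adj_val_apply_iff f h0 hj).mp (Or.inl h)).resolve_right
      (by rintro rfl; exact hl' h), by rintro rfl; exact h1⟩
  refine adj_apply_iff_of_adj_apply_iff (K := (cycleGraph (n + 4)).comap Fin.succ)
    (fun i => (f i : V)) 0 (fun j hj => ?_) (fun i j hi hj => ?_) i j
  · have h1l : (1 : Fin (n + 3)) ≠ Fin.last _ := by simp [Fin.ext_iff]
    have h0l : (0 : Fin (n + 3)) ≠ Fin.last _ := by simp [Fin.ext_iff]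
    show _ ↔ (cycleGraph (n + 4)).Adj (Fin.succ 0) j.succ
    rw [h0, hu j hj, cycleGraph_adj_succ, cycleGraph_adj_zero]
    grind
  · show _ ↔ (cycleGraph (n + 4)).Adj i.succ j.succ
    rw [cycleGraph_adj_succ, contractPair_adj_val_apply_iff f h0 hi hj]
    simp [hi, hj]

variable [DecidableEq V]

theorem exists_lift_of_adj_left (h1 : G.Adj u (f 1)) (hl : G.Adj u (f (Fin.last _))) :
    ∃ t, G.IsInducedCycle t ∧ contractMap he.ne '' t = Set.range f := by
  refine ⟨_, isInducedCycle_range_of_lift (contractMap he.ne) f.injective (fun i => f i)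
    (fun i => contractMap_coe he.ne _) (adj_apply_iff_of_adj_apply_iff _ 0 (fun j hj => ?_)
      (fun i j hi hj => contractPair_adj_val_apply_iff f h0 hi hj))⟩
  rw [h0, cycleGraph_adj_zero]
  refine ⟨fun h => (contractPair_adj_or_adj_val_apply_iff f h0 hj).mp (Or.inl h), ?_⟩
  rintro (rfl | rfl)
  exacts [h1, hl]

theorem exists_lift_of_adj_right (h1 : G.Adj v (f 1)) (hl : G.Adj v (f (Fin.last _))) :
    ∃ t, G.IsInducedCycle t ∧ contractMap he.ne '' t = Set.range f := by
  refine ⟨_, isInducedCycle_range_of_lift (contractMap he.ne) f.injective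
    (Function.update (fun i => f i) 0 v) (fun i => ?_)
    (adj_apply_iff_of_adj_apply_iff _ 0 (fun j hj => ?_) (fun i j hi hj => ?_))⟩
  · rcases eq_or_ne i 0 with rfl | hi
    · rw [Function.update_self, contractMap_self]
      exact Subtype.ext h0.symm
    · rw [Function.update_of_ne hi, contractMap_coe]
  · rw [Function.update_self, Function.update_of_ne hj, cycleGraph_adj_zero]
    refine ⟨fun h => (contractPair_adj_or_adj_val_apply_iff f h0 hj).mp (Or.inr h), ?_⟩
    rintro (rfl | rfl)
    exacts [h1, hl]
  · rw [Function.update_of_ne hi, Function.update_of_ne hj]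
    exact contractPair_adj_val_apply_iff f h0 hi hj

theorem exists_lift_of_subdivide (h1 : G.Adj u (f 1)) (h1' : ¬G.Adj v (f 1))
    (hl : G.Adj v (f (Fin.last _))) (hl' : ¬G.Adj u (f (Fin.last _))) :
    ∃ t, G.IsInducedCycle t ∧ contractMap he.ne '' t = Set.range f := by
  have hv : ∀ j, j ≠ 0 → (G.Adj v (f j) ↔ j = Fin.last _) := fun j hj =>
    ⟨fun h => ((contractPair_adj_or_adj_val_apply_iff f h0 hj).mp (Or.inr h)).resolve_left
      (by rintro rfl; exact h1' h), by rintro rfl; exact hl⟩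
  have hadj_v : ∀ j, G.Adj v (f j) ↔ (cycleGraph (n + 4)).Adj 0 j.succ := by
    intro j
    rw [cycleGraph_adj_zero_succ]
    rcases eq_or_ne j 0 with rfl | hj
    · simpa [h0] using he.symm
    · simp [hj, hv j hj]
  let g : cycleGraph (n + 4) ↪g G :=
    ⟨⟨Fin.cons v (fun i => f i), Fin.cons_injective_iff.mpr
      ⟨fun ⟨i, hi⟩ => (f i).2 hi, Subtype.val_injective.comp f.injective⟩⟩,
      fun {i j} => adj_apply_iff_of_adj_apply_iff _ 0 (fun j hj => ?_) (fun i j hi hj => ?_) i j⟩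
  · refine ⟨_, isInducedCycle_range (by omega) g, ?_⟩
    show contractMap he.ne '' Set.range (Fin.cons v fun i => (f i : V)) = _
    rw [Fin.range_cons, Set.image_insert_eq, ← Set.range_comp, contractMap_self]
    simp only [Function.comp_def, contractMap_coe]
    exact Set.insert_eq_of_mem ⟨0, Subtype.ext h0⟩
  · obtain ⟨j, rfl⟩ := Fin.exists_succ_eq.mpr hj
    simpa using hadj_v j
  · obtain ⟨i, rfl⟩ := Fin.exists_succ_eq.mpr hi
    obtain ⟨j, rfl⟩ := Fin.exists_succ_eq.mpr hj
    simpa using contractPair_adj_val_apply_iff_succ f h0 h1 hl' i j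

theorem exists_lift_of_val_apply_zero :
    ∃ t, G.IsInducedCycle t ∧ contractMap he.ne '' t = Set.range f := by
  have hl0 : (Fin.last _ : Fin (n + 3)) ≠ 0 := by simp [Fin.ext_iff]
  have h1 := (contractPair_adj_or_adj_val_apply_iff f h0 one_ne_zero).mpr (Or.inl rfl)
  have hl := (contractPair_adj_or_adj_val_apply_iff f h0 hl0).mpr (Or.inr rfl)
  by_cases hu : G.Adj u (f 1) ∧ G.Adj u (f (Fin.last _))
  · exact exists_lift_of_adj_left he f h0 hu.1 hu.2
  by_cases hv : G.Adj v (f 1) ∧ G.Adj v (f (Fin.last _))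
  · exact exists_lift_of_adj_right he f h0 hv.1 hv.2
  by_cases hu1 : G.Adj u (f 1)
  · exact exists_lift_of_subdivide he f h0 hu1 (by tauto) (by tauto) (by tauto)
  let f' := f.comp (cycleGraph.reflect _).toRelEmbedding
  have hf'0 : f' 0 = f 0 := congrArg f neg_zero
  have hf'1 : f' 1 = f (Fin.last _) := congrArg f (neg_eq_iff_eq_neg.mpr (Fin.neg_last _).symm)
  have hf'l : f' (Fin.last _) = f 1 := congrArg f (Fin.neg_last _)
  rw [← Embedding.range_comp_iso f (cycleGraph.reflect _)]
  exact exists_lift_of_subdivide he f' (by rwa [hf'0]) (by rw [hf'1]; tauto) (by rw [hf'1]; tauto)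
    (by rw [hf'l]; tauto) (by rw [hf'l]; tauto)

end Contraction

theorem IsInducedCycle.exists_lift [DecidableEq V] {u v : V} (he : G.Adj u v)
    {s : Set {x // x ≠ v}} (hs : (G.contractPair u v).IsInducedCycle s) :
    ∃ t, G.IsInducedCycle t ∧ contractMap he.ne '' t = s := by
  obtain ⟨n, f, rfl⟩ := hs.exists_embedding
  by_cases hu : ∃ k, (f k : V) = u
  · obtain ⟨k, hk⟩ := hu
    rw [← Embedding.range_comp_iso f (cycleGraph.rotate k)]
    exact exists_lift_of_val_apply_zero he _ (by simpa [cycleGraph.rotate] using hk)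
  · simp only [not_exists] at hu
    exact ⟨_, isInducedCycle_range_of_lift (contractMap he.ne) f.injective (fun i => f i)
      (fun i => contractMap_coe he.ne _)
      (fun i j => by rw [← contractPair_adj_iff_of_ne (hu i) (hu j), f.map_adj_iff])⟩

end SimpleGraph

theorem stmt10_general {V : Type*} [DecidableEq V] (G : SimpleGraph V)
    (u v : V) (he : G.Adj u v) :
    ∃ ψ : (G.contractPair u v).inducedCycles → G.inducedCycles,
      Function.Injective ψ ∧
      ∀ C : (G.contractPair u v).inducedCycles,
        contractMap he.ne '' ((ψ C : Set V)) = (C : Set {x : V // x ≠ v}) := by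
  choose lift hlift using fun C : (G.contractPair u v).inducedCycles => C.2.exists_lift he
  refine ⟨fun C => ⟨lift C, (hlift C).1⟩, fun C D h => Subtype.ext ?_, fun C => (hlift C).2⟩
  rw [← (hlift C).2, ← (hlift D).2]
  exact congrArg (contractMap he.ne '' ·) (congrArg Subtype.val h)

theorem stmt10 {V : Type*} [Fintype V] [DecidableEq V] (G : SimpleGraph V)
    (hconn : G.Connected) (u v : V) (he : G.Adj u v) :
    ∃ ψ : (G.contractPair u v).inducedCycles → G.inducedCycles,
      Function.Injective ψ ∧
      ∀ C : (G.contractPair u v).inducedCycles,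
        contractMap he.ne '' ((ψ C : Set V)) = (C : Set {x : V // x ≠ v}) :=
  stmt10_general G u v he
end
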